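/- There is a universal constant K such that for every integer n ≥ 2, every real p ≥ 2, and all complex coefficients a₁,…,a_n, one has (√(log n)/√n) · ‖Σ_{i=1}^n a_i W_i‖_{L^p} ≤ K √p (Σ_{i=1}^n |a_i|²)^{1/2}, where W₁,…,W_n are the first n Walsh functions. -/

import Mathlib

/-!
Orthonormality of the Walsh system gives `‖f‖₂ = (∑ |aᵢ|²)^{1/2}` for `f = ∑_{i<n} aᵢ Wᵢ`,
and `|Wᵢ| = 1` gives `‖f‖_∞ ≤ √n ‖a‖₂`. Interpolating, `‖f‖_p^p ≤ ‖f‖_∞^{p-2} ‖f‖₂²`, so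
`‖f‖_p ≤ √n · n^{-1/p} ‖a‖₂`. It remains to see that `√(log n) · n^{-1/p} ≤ √p`: with
`t = log n / p` this is `√t · e^{-t} ≤ 1`. Hence `K = 1` works.
-/

open MeasureTheory ProbabilityTheory Finset Real
open scoped symmDiff ENNReal ComplexConjugate

theorem Finset.prod_mul_prod_eq_prod_symmDiff {ι M : Type*} [DecidableEq ι] [CommMonoid M]
    {f : ι → M} (S T : Finset ι) (hf : ∀ k ∈ S ∩ T, f k * f k = 1) :
    (∏ k ∈ S, f k) * ∏ k ∈ T, f k = ∏ k ∈ S ∆ T, f k :=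
  calc (∏ k ∈ S, f k) * ∏ k ∈ T, f k
      = (∏ k ∈ S ∆ T, f k) * ∏ k ∈ S ∩ T, f k * f k := by
        rw [← prod_union_inter, symmDiff_eq_sup_sdiff_inf, sup_eq_union, inf_eq_inter,
          ← prod_sdiff inter_subset_union, prod_mul_distrib, mul_assoc]
    _ = ∏ k ∈ S ∆ T, f k := by rw [prod_eq_one hf, mul_one]

section RCLike

variable {ι 𝕜 : Type*} [RCLike 𝕜]

theorem norm_sq_sum_mul_ofReal (s : Finset ι) (a : ι → 𝕜) (e : ι → ℝ) :
    ‖∑ i ∈ s, a i * (e i : 𝕜)‖ ^ 2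
      = ∑ i ∈ s, ∑ j ∈ s, RCLike.re (a i * conj (a j)) * (e i * e j) := by
  rw [← RCLike.ofReal_re (K := 𝕜) (_ ^ 2), RCLike.ofReal_pow, ← RCLike.mul_conj, map_sum,
    sum_mul_sum, map_sum RCLike.re]
  refine sum_congr rfl fun i _ => ?_
  rw [map_sum RCLike.re]
  refine sum_congr rfl fun j _ => ?_
  rw [map_mul (starRingEnd 𝕜), RCLike.conj_ofReal, mul_mul_mul_comm, ← RCLike.ofReal_mul,
    RCLike.re_mul_ofReal]

theorem norm_sum_mul_ofReal_le (s : Finset ι) (a : ι → 𝕜) {e : ι → ℝ}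
    (he : ∀ i ∈ s, |e i| ≤ 1) :
    ‖∑ i ∈ s, a i * (e i : 𝕜)‖ ≤ √(#s : ℝ) * √(∑ i ∈ s, ‖a i‖ ^ 2) :=
  calc ‖∑ i ∈ s, a i * (e i : 𝕜)‖ ≤ ∑ i ∈ s, ‖a i‖ := by
        refine (norm_sum_le _ _).trans (sum_le_sum fun i hi => ?_)
        rw [norm_mul, RCLike.norm_ofReal]
        exact mul_le_of_le_one_right (norm_nonneg _) (he i hi)
    _ ≤ √(#s : ℝ) * √(∑ i ∈ s, ‖a i‖ ^ 2) := by
        rw [← Real.sqrt_mul (Nat.cast_nonneg _),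
          Real.le_sqrt (sum_nonneg fun i _ => norm_nonneg _) (by positivity)]
        exact sq_sum_le_card_mul_sum_sq

variable {Ω : Type*} [MeasurableSpace Ω] {μ : Measure Ω}

theorem integrable_norm_sq_sum_mul_ofReal (s : Finset ι) (a : ι → 𝕜) {e : ι → Ω → ℝ}
    (he : ∀ i j, Integrable (fun x => e i x * e j x) μ) :
    Integrable (fun x => ‖∑ i ∈ s, a i * (e i x : 𝕜)‖ ^ 2) μ := by
  simp_rw [norm_sq_sum_mul_ofReal]
  exact integrable_finsetSum _ fun i _ => integrable_finsetSum _ fun j _ =>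
    (he i j).const_mul _

theorem integral_norm_sq_sum_mul_ofReal [DecidableEq ι] (s : Finset ι) (a : ι → 𝕜)
    {e : ι → Ω → ℝ} (he : ∀ i j, Integrable (fun x => e i x * e j x) μ)
    (horth : ∀ i j, ∫ x, e i x * e j x ∂μ = if i = j then 1 else 0) :
    ∫ x, ‖∑ i ∈ s, a i * (e i x : 𝕜)‖ ^ 2 ∂μ = ∑ i ∈ s, ‖a i‖ ^ 2 := by
  simp_rw [norm_sq_sum_mul_ofReal]
  rw [integral_finsetSum _ fun i _ => integrable_finsetSum _ fun j _ => (he i j).const_mul _]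
  refine sum_congr rfl fun i hi => ?_
  rw [integral_finsetSum _ fun j _ => (he i j).const_mul _]
  simp_rw [integral_const_mul, horth, mul_ite, mul_one, mul_zero, sum_ite_eq, if_pos hi,
    RCLike.mul_conj, ← RCLike.ofReal_pow, RCLike.ofReal_re]

end RCLike

theorem eLpNorm_le_of_ae_norm_le_of_integrable_sq {Ω E : Type*} [MeasurableSpace Ω]
    [NormedAddCommGroup E] {μ : Measure Ω} {f : Ω → E} {B p : ℝ} (hB₀ : 0 ≤ B)
    (hB : ∀ᵐ x ∂μ, ‖f x‖ ≤ B) (hp : 2 ≤ p)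
    (hf : Integrable (fun x => ‖f x‖ ^ 2) μ) :
    eLpNorm f (ENNReal.ofReal p) μ
      ≤ ENNReal.ofReal ((B ^ (p - 2) * ∫ x, ‖f x‖ ^ 2 ∂μ) ^ p⁻¹) := by
  have hp₀ : 0 < p := by linarith
  have hpoint : ∀ᵐ x ∂μ, ‖f x‖ₑ ^ p ≤ ENNReal.ofReal (B ^ (p - 2) * ‖f x‖ ^ 2) := by
    filter_upwards [hB] with x hx
    rw [← ofReal_norm, ENNReal.ofReal_rpow_of_nonneg (norm_nonneg _) hp₀.le]
    refine ENNReal.ofReal_le_ofReal ?_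
    calc ‖f x‖ ^ p = ‖f x‖ ^ (p - 2) * ‖f x‖ ^ 2 := by
          rw [← rpow_two, ← rpow_add' (norm_nonneg _) (by linarith), sub_add_cancel]
      _ ≤ B ^ (p - 2) * ‖f x‖ ^ 2 := by gcongr
  rw [eLpNorm_eq_lintegral_rpow_enorm_toReal (by positivity) ENNReal.ofReal_ne_top,
    ENNReal.toReal_ofReal hp₀.le, one_div,
    ← ENNReal.ofReal_rpow_of_nonneg (by positivity) (by positivity), ← integral_const_mul,
    ofReal_integral_eq_lintegral_ofReal (hf.const_mul _) (.of_forall fun x => by positivity)]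
  gcongr ?_ ^ _
  exact lintegral_mono_ae hpoint

namespace Real

theorem sqrt_le_exp (t : ℝ) : √t ≤ exp t := by
  rcases le_or_gt t 0 with ht | ht
  · rw [sqrt_eq_zero_of_nonpos ht]
    exact (exp_pos t).le
  · refine (sqrt_le_iff.2 ⟨by linarith, by nlinarith⟩ : √t ≤ t + 1).trans ?_
    linarith [add_one_le_exp t]

theorem sqrt_log_mul_rpow_neg_inv_le {x p : ℝ} (hx : 0 < x) (hp : 0 < p) :
    √(log x) * x ^ (-p⁻¹) ≤ √p := by
  set t := log x / p with ht
  have hlog : log x = p * t := by rw [ht, mul_div_cancel₀ _ hp.ne']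
  have hrpow : x ^ (-p⁻¹) = exp (-t) := by
    rw [rpow_def_of_pos hx, hlog]
    congr 1
    field_simp
  calc √(log x) * x ^ (-p⁻¹) = √p * (√t * exp (-t)) := by
        rw [hrpow, hlog, sqrt_mul hp.le, mul_assoc]
    _ ≤ √p * (exp t * exp (-t)) := by gcongr; exact sqrt_le_exp t
    _ = √p := by rw [← exp_add, add_neg_cancel, exp_zero, mul_one]

theorem rpow_sub_two_mul_sq_rpow_inv {N s p : ℝ} (hN : 0 < N) (hs : 0 ≤ s) (hp : 2 ≤ p) :
    ((√N * s) ^ (p - 2) * s ^ 2) ^ p⁻¹ = √N * N ^ (-p⁻¹) * s := by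
  have hp₀ : p ≠ 0 := by positivity
  have hu : 0 < √N := sqrt_pos.2 hN
  calc ((√N * s) ^ (p - 2) * s ^ 2) ^ p⁻¹ = (√N ^ (p - 2) * s ^ p) ^ p⁻¹ := by
        rw [mul_rpow hu.le hs, mul_assoc, ← rpow_two s, ← rpow_add' hs (by linarith),
          sub_add_cancel]
    _ = √N ^ ((p - 2) * p⁻¹) * s := by
        rw [mul_rpow (by positivity) (by positivity), ← rpow_mul hu.le, rpow_rpow_inv hs hp₀]
    _ = √N * N ^ (-p⁻¹) * s := by
        rw [sqrt_eq_rpow, ← rpow_mul hN.le, ← rpow_add hN]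
        congr 2
        field_simp
        ring

end Real

/-- The Walsh function `W_i` computed from the binary digits of `i` below `m`; it is the genuine
`W_i` as soon as `i < 2 ^ m`. -/
def walsh {Ω : Type*} (r : ℕ → Ω → ℝ) (m i : ℕ) (x : Ω) : ℝ :=
  ∏ k ∈ range m, if i.testBit k then r k x else 1

theorem walsh_eq_prod {Ω : Type*} (r : ℕ → Ω → ℝ) (m i : ℕ) (x : Ω) :
    walsh r m i x = ∏ k ∈ (range m).filter (fun k => i.testBit k), r k x :=
  (prod_filter _ _).symm

theorem filter_range_testBit_injOn (m : ℕ) :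
    Set.InjOn (fun i : ℕ => (range m).filter (fun k => i.testBit k)) (Set.Iio (2 ^ m)) := by
  intro i hi j hj hij
  refine Nat.eq_of_testBit_eq fun k => ?_
  by_cases hk : k < m
  · simpa [hk] using congr(k ∈ $hij)
  · have hm : 2 ^ m ≤ 2 ^ k := Nat.pow_le_pow_right two_pos (not_lt.1 hk)
    rw [Nat.testBit_lt_two_pow (hi.trans_le hm), Nat.testBit_lt_two_pow (hj.trans_le hm)]

variable {Ω : Type*} [MeasurableSpace Ω] {μ : Measure Ω}

theorem measurable_walsh {r : ℕ → Ω → ℝ} (hr : ∀ k, Measurable (r k)) (m i : ℕ) :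
    Measurable (walsh r m i) := by
  rw [show walsh r m i = _ from funext (walsh_eq_prod r m i)]
  exact measurable_prod _ fun k _ => hr k

structure IsRademacherSequence (r : ℕ → Ω → ℝ) (μ : Measure Ω) : Prop where
  measurable : ∀ k, Measurable (r k)
  iIndepFun : iIndepFun r μ
  map_eq : ∀ k, μ.map (r k) = (2⁻¹ : ℝ≥0∞) • (Measure.dirac (-1) + Measure.dirac 1)

namespace IsRademacherSequence

variable {r : ℕ → Ω → ℝ} (h : IsRademacherSequence r μ)
include h

theorem ae_abs_eq_one : ∀ᵐ x ∂μ, ∀ k, |r k x| = 1 := by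
  refine ae_all_iff.2 fun k => ?_
  have hs : MeasurableSet ({1, -1} : Set ℝ)ᶜ := by measurability
  have hnull : μ (r k ⁻¹' ({1, -1} : Set ℝ)ᶜ) = 0 := by
    rw [← Measure.map_apply (h.measurable k) hs, h.map_eq k]
    simp [Measure.dirac_apply' _ hs]
  filter_upwards [measure_eq_zero_iff_ae_notMem.1 hnull] with x hx
  rw [abs_eq zero_le_one]
  simpa [or_iff_not_imp_left] using hx

theorem integral_eq_zero (k : ℕ) : ∫ x, r k x ∂μ = 0 := by
  have hdirac (a : ℝ) : Integrable id (Measure.dirac a) :=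
    (integrable_const a).congr (ae_eq_dirac id).symm
  have hmap : ∫ x, r k x ∂μ = ∫ y, id y ∂μ.map (r k) :=
    (integral_map (h.measurable k).aemeasurable aestronglyMeasurable_id).symm
  rw [hmap, h.map_eq k, integral_smul_measure, integral_add_measure (hdirac _) (hdirac _)]
  simp

theorem integral_prod_eq_zero {S : Finset ℕ} (hS : S.Nonempty) :
    ∫ x, ∏ k ∈ S, r k x ∂μ = 0 := by
  obtain ⟨j, hj⟩ := hS
  have hsplit := (h.iIndepFun.indepFun_finsetProd_of_notMem h.measurable
    (notMem_erase j S)).integral_fun_mul_eq_mul_integral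
    ((S.erase j).aestronglyMeasurable_prod fun k _ => (h.measurable k).aestronglyMeasurable)
    (h.measurable j).aestronglyMeasurable
  simp only [prod_apply] at hsplit
  simp_rw [← prod_erase_mul S _ hj, hsplit, h.integral_eq_zero, mul_zero]

theorem integral_prod_mul_prod [IsProbabilityMeasure μ] (S T : Finset ℕ) :
    ∫ x, (∏ k ∈ S, r k x) * ∏ k ∈ T, r k x ∂μ = if S = T then 1 else 0 := by
  have hsymm : (fun x => (∏ k ∈ S, r k x) * ∏ k ∈ T, r k x)
      =ᵐ[μ] fun x => ∏ k ∈ S ∆ T, r k x := by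
    filter_upwards [h.ae_abs_eq_one] with x hx
    exact prod_mul_prod_eq_prod_symmDiff S T fun k _ => by rw [← abs_mul_abs_self, hx, one_mul]
  rw [integral_congr_ae hsymm]
  split_ifs with hST
  · simp [hST]
  · exact h.integral_prod_eq_zero (nonempty_iff_ne_empty.2 (by simpa using hST))

theorem ae_abs_walsh_eq_one : ∀ᵐ x ∂μ, ∀ m i, |walsh r m i x| = 1 := by
  filter_upwards [h.ae_abs_eq_one] with x hx m i
  simp [walsh_eq_prod, abs_prod, hx]

theorem integrable_walsh_mul_walsh [IsFiniteMeasure μ] (m i j : ℕ) :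
    Integrable (fun x => walsh r m i x * walsh r m j x) μ := by
  refine .of_bound ((measurable_walsh h.measurable m i).mul
    (measurable_walsh h.measurable m j)).aestronglyMeasurable 1 ?_
  filter_upwards [h.ae_abs_walsh_eq_one] with x hx
  simp [hx]

theorem integral_walsh_mul_walsh [IsProbabilityMeasure μ] {m i j : ℕ} (hi : i < 2 ^ m)
    (hj : j < 2 ^ m) :
    ∫ x, walsh r m i x * walsh r m j x ∂μ = if i = j then 1 else 0 := by
  simp_rw [walsh_eq_prod, h.integral_prod_mul_prod, (filter_range_testBit_injOn m).eq_iff hi hj]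

end IsRademacherSequence

/-- `Λ(p)` bound for the truncated Walsh system.  There is a universal `K` such that
for the Walsh system `W_i = ∏_{k : bit k of i is 1} r_k` built from i.i.d. uniform
`±1` coordinate functions `r_k` (any realization on a probability space), every
`n ≥ 2`, `p ≥ 2`, and all complex coefficients,
`(√(log n)/√n) ‖∑_{i<n} a_i W_i‖_p ≤ K √p (∑ |a_i|²)^{1/2}`.
Since `i < n ≤ 2^n`, only the bits `k < n` of `i` occur in `W_i`. -/
theorem stmt17 :
    ∃ K : ℝ, 0 < K ∧
      ∀ (Ω : Type) [MeasurableSpace Ω] (μ : Measure Ω) [IsProbabilityMeasure μ]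
        (r : ℕ → Ω → ℝ),
        (∀ k, Measurable (r k)) →
        -- the coordinates are independent
        iIndepFun r μ →
        -- each coordinate is uniform on {-1, 1}
        (∀ k, μ.map (r k)
          = (2⁻¹ : ENNReal) • (Measure.dirac (-1) + Measure.dirac 1)) →
        ∀ (n : ℕ), 2 ≤ n → ∀ (p : ℝ), 2 ≤ p → ∀ a : Fin n → ℂ,
          ENNReal.ofReal (Real.sqrt (Real.log n) / Real.sqrt n) *
            eLpNorm
              (fun x => ∑ i, a i *
                ((∏ k ∈ Finset.range n,
                  if Nat.testBit (i : ℕ) k then r k x else 1 : ℝ) : ℂ))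
              (ENNReal.ofReal p) μ
            ≤ ENNReal.ofReal (K * Real.sqrt p * Real.sqrt (∑ i, ‖a i‖ ^ 2)) := by
  refine ⟨1, one_pos, fun Ω _ μ _ r hr hind hmap n hn p hp a => ?_⟩
  have h : IsRademacherSequence r μ := ⟨hr, hind, hmap⟩
  have hn₀ : (0 : ℝ) < n := by positivity
  have hW (i : Fin n) : (i : ℕ) < 2 ^ n := i.isLt.trans n.lt_two_pow_self
  set s := √(∑ i, ‖a i‖ ^ 2)
  have hL2 : ∫ x, ‖∑ i, a i * (walsh r n i x : ℂ)‖ ^ 2 ∂μ = s ^ 2 := by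
    rw [sq_sqrt (by positivity)]
    refine integral_norm_sq_sum_mul_ofReal (e := fun i => walsh r n i) _ a
      (fun i j => h.integrable_walsh_mul_walsh n i j) fun i j => ?_
    simp_rw [h.integral_walsh_mul_walsh (hW i) (hW j), Fin.val_inj]
  have hsup : ∀ᵐ x ∂μ, ‖∑ i, a i * (walsh r n i x : ℂ)‖ ≤ √n * s := by
    filter_upwards [h.ae_abs_walsh_eq_one] with x hx
    simpa using norm_sum_mul_ofReal_le univ a fun i _ => (hx n i).le
  have hLp := eLpNorm_le_of_ae_norm_le_of_integrable_sq (by positivity) hsup hp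
    (integrable_norm_sq_sum_mul_ofReal _ a fun i j => h.integrable_walsh_mul_walsh n i j)
  rw [hL2, rpow_sub_two_mul_sq_rpow_inv hn₀ (sqrt_nonneg _) hp] at hLp
  calc ENNReal.ofReal (√(log n) / √n) * eLpNorm (fun x => ∑ i, a i * (walsh r n i x : ℂ))
        (ENNReal.ofReal p) μ
      ≤ ENNReal.ofReal (√(log n) / √n) * ENNReal.ofReal (√n * n ^ (-p⁻¹) * s) := by gcongr
    _ = ENNReal.ofReal (√(log n) * n ^ (-p⁻¹) * s) := by
        rw [← ENNReal.ofReal_mul (by positivity)]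
        congr 1
        field_simp
    _ ≤ ENNReal.ofReal (1 * √p * s) := by
        rw [one_mul]
        gcongr
        exact sqrt_log_mul_rpow_neg_inv_le hn₀ (by linarith)
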